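/- arXiv:1510.04590 — 3 statements merged into one kernel-verified Lean document; each statement's English description precedes it below -/
import Mathlib

section
/- If the cut set E ∩ (A × (V\A)) contains exactly one edge e, then ⊕_{v∈A} xor(v) = name(e). Hence if edge names are distinct, the unique cut edge can be recovered from the XOR value. -/
/-!
Counting each edge once for every endpoint it has in `A`, the double sum becomes
`∑ e, #(A ∩ e) • name e`. An edge with both or neither endpoint in `A` is counted an even number
of times and vanishes in characteristic 2, so only the cut edges survive, each exactly once.
-/

open Finset

theorem Even.nsmul_eq_zero_of_zmod_two {M : Type*} [AddCommGroup M] [Module (ZMod 2) M]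
    {n : ℕ} (hn : Even n) (x : M) : n • x = 0 := by
  rw [← Nat.cast_smul_eq_nsmul (ZMod 2), hn.natCast_zmod_two, zero_smul]

namespace Sym2

variable {V : Type*} [DecidableEq V] {A : Finset V} {u w : V}

theorem card_filter_mem_eq_one (hu : u ∈ A) (hw : w ∉ A) : #{v ∈ A | v ∈ s(u, w)} = 1 := by
  rw [card_eq_one]
  refine ⟨u, ?_⟩
  ext v
  simp only [mem_filter, mem_iff, mem_singleton]
  constructor
  · rintro ⟨hv, rfl | rfl⟩
    · rfl
    · exact absurd hv hw
  · rintro rfl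
    exact ⟨hu, Or.inl rfl⟩

theorem even_card_filter_mem (huw : u ≠ w) (h : u ∈ A ↔ w ∈ A) :
    Even #{v ∈ A | v ∈ s(u, w)} := by
  by_cases hu : u ∈ A
  · have hfilter : {v ∈ A | v ∈ s(u, w)} = {u, w} := by
      ext v
      simp only [mem_filter, mem_iff, mem_insert, mem_singleton, and_iff_right_iff_imp]
      rintro (rfl | rfl)
      exacts [hu, h.mp hu]
    rw [hfilter, card_pair huw]
    exact even_two
  · have hfilter : {v ∈ A | v ∈ s(u, w)} = ∅ := by
      ext v
      simp only [mem_filter, mem_iff, notMem_empty, iff_false, not_and]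
      rintro hv (rfl | rfl)
      exacts [hu hv, hu (h.mpr hv)]
    rw [hfilter, card_empty]
    exact Even.zero

end Sym2

namespace SimpleGraph

variable {V : Type*} [Fintype V] [DecidableEq V] (G : SimpleGraph V) [DecidableRel G.Adj]

def cutEdgeFinset (A : Finset V) : Finset (Sym2 V) :=
  G.edgeFinset.filter (fun e => ∃ u w, e = s(u, w) ∧ u ∈ A ∧ w ∉ A)

theorem sum_sum_incidenceFinset_eq_sum_edgeFinset {M : Type*} [AddCommMonoid M] (A : Finset V)
    (f : Sym2 V → M) :
    ∑ v ∈ A, ∑ e ∈ G.incidenceFinset v, f e = ∑ e ∈ G.edgeFinset, #{v ∈ A | v ∈ e} • f e := by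
  rw [sum_comm' (t' := G.edgeFinset) (s' := fun e => {v ∈ A | v ∈ e})]
  · simp only [sum_const]
  · intro v e
    simp only [mem_incidenceFinset, incidenceSet, Set.mem_ofPred_eq, mem_filter, mem_edgeFinset]
    tauto

theorem sum_sum_incidenceFinset_eq_sum_cutEdgeFinset {M : Type*} [AddCommGroup M]
    [Module (ZMod 2) M] (A : Finset V) (f : Sym2 V → M) :
    ∑ v ∈ A, ∑ e ∈ G.incidenceFinset v, f e = ∑ e ∈ G.cutEdgeFinset A, f e := by
  rw [sum_sum_incidenceFinset_eq_sum_edgeFinset, cutEdgeFinset, sum_filter]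
  refine sum_congr rfl fun e he => ?_
  induction e with
  | h u w =>
    split_ifs with hcut
    · obtain ⟨a, b, hab, ha, hb⟩ := hcut
      rw [hab, Sym2.card_filter_mem_eq_one ha hb, one_smul]
    · refine (Sym2.even_card_filter_mem (G.mem_edgeFinset.mp he).ne ⟨fun hu => ?_, fun hw => ?_⟩
        ).nsmul_eq_zero_of_zmod_two _
      · by_contra hw
        exact hcut ⟨u, w, rfl, hu, hw⟩
      · by_contra hu
        exact hcut ⟨w, u, Sym2.eq_swap, hw, hu⟩

end SimpleGraph

/-- If the cut `E ∩ (A × (V \ A))` contains exactly one edge `e`, then the XOR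
over `v ∈ A` of the XOR of names of incident edges equals `name e`; hence if
names are distinct the unique cut edge is recovered from the XOR value. -/
theorem xor_trick_unique_cut_edge {V : Type*} [Fintype V] [DecidableEq V]
    (G : SimpleGraph V) [DecidableRel G.Adj] (k : ℕ)
    (name : Sym2 V → (Fin k → ZMod 2)) (A : Finset V) (e : Sym2 V)
    (he : e ∈ G.edgeFinset.filter
        (fun e => ∃ u w, e = s(u, w) ∧ u ∈ A ∧ w ∉ A))
    (hcard : (G.edgeFinset.filter
        (fun e => ∃ u w, e = s(u, w) ∧ u ∈ A ∧ w ∉ A)).card = 1) :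
    ∑ v ∈ A, ∑ e' ∈ G.incidenceFinset v, name e' = name e := by
  change e ∈ G.cutEdgeFinset A at he
  change #(G.cutEdgeFinset A) = 1 at hcard
  obtain ⟨a, hcut⟩ := card_eq_one.mp hcard
  rw [hcut, mem_singleton] at he
  rw [G.sum_sum_incidenceFinset_eq_sum_cutEdgeFinset, hcut, sum_singleton, he]
end

section
/- Let C be a nonempty finite set of edges with |C| = s, and for each i = 0,…,2⌈log₂ n⌉ let E_i be a random subset of C where each element is included independently with probability 2^{-i}. If 2^{i} ≤ s ≤ 2^{i+1} for some i in range (which holds when 1 ≤ s ≤ n²), then the probability that |E_i ∩ C| = 1 is at least s · 2^{-i} · (1 - 2^{-i})^{s-1} ≥ 1/(2e) > 1/9. -/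
/-!
The event "exactly one element survives" is the disjoint union over `e ∈ C` of the events
"only `e` survives", each of probability `p (1 - p)^(s - 1)` by independence, so its
probability is exactly `s p (1 - p)^(s - 1)` with `p = 2⁻ⁱ`.

For the numerical bound write `m = 2^i`, so `p = 1/m` and `m ≤ s ≤ 2m - 1`. Since
`sp ≥ 1`, the ratio `(s + 1)(1 - p)/s` of consecutive values is at most `1`, so the worst
case is `s = 2m - 1`, where the value is `(2 - 1/m)(1 - 1/m)^(2(m - 1)) ≥ (3/2) e⁻²`,
using `(1 + 1/n)^n ≤ e`; and `(3/2) e⁻² ≥ 1/(2e)` because `e ≤ 3`.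
-/

open MeasureTheory ProbabilityTheory Finset Function

def exactlyOneProb (s : ℕ) (p : ℝ) : ℝ := s * p * (1 - p) ^ (s - 1)

lemma exactlyOneProb_succ_le {p : ℝ} (hp₀ : 0 ≤ p) (hp₁ : p ≤ 1) {n : ℕ} (hn : 1 ≤ n * p) :
    exactlyOneProb (n + 1) p ≤ exactlyOneProb n p := by
  rcases n with _ | k
  · simp at hn
    linarith
  have hratio : ((k + 1 : ℕ) + 1 : ℝ) * (1 - p) ≤ (k + 1 : ℕ) := by push_cast at hn ⊢; nlinarith
  calc exactlyOneProb (k + 1 + 1) p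
      = ((k + 1 : ℕ) + 1 : ℝ) * (1 - p) * (p * (1 - p) ^ k) := by
        simp only [exactlyOneProb, Nat.add_sub_cancel]; push_cast; ring
    _ ≤ (k + 1 : ℕ) * (p * (1 - p) ^ k) := by gcongr
    _ = exactlyOneProb (k + 1) p := by simp only [exactlyOneProb, Nat.add_sub_cancel]; ring

lemma antitoneOn_exactlyOneProb {p : ℝ} (hp₀ : 0 ≤ p) (hp₁ : p ≤ 1) {k : ℕ} (hk : 1 ≤ k * p) :
    AntitoneOn (exactlyOneProb · p) (Set.Ici k) :=
  antitoneOn_nat_Ici_of_succ_le fun n hn ↦ exactlyOneProb_succ_le hp₀ hp₁ <|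
    hk.trans (by gcongr)

lemma exp_neg_one_le_one_sub_inv_pow (n : ℕ) : Real.exp (-1) ≤ (1 - ((n : ℝ) + 1)⁻¹) ^ n := by
  rcases Nat.eq_zero_or_pos n with rfl | hn
  · simp
  have hn' : (0 : ℝ) < n := by exact_mod_cast hn
  have hbase : 1 - ((n : ℝ) + 1)⁻¹ = (1 + (n : ℝ)⁻¹)⁻¹ := by field_simp; ring
  rw [hbase, inv_pow, Real.exp_neg]
  exact inv_anti₀ (by positivity) Real.one_add_inv_pow_le_exp

lemma one_div_two_mul_exp_le_exactlyOneProb_two_mul_add_one (n : ℕ) :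
    1 / (2 * Real.exp 1) ≤ exactlyOneProb (2 * n + 1) ((n : ℝ) + 1)⁻¹ := by
  have he : 1 ≤ Real.exp 1 := Real.one_le_exp zero_le_one
  rcases Nat.eq_zero_or_pos n with rfl | hn
  · rw [div_le_iff₀ (by positivity)]
    norm_num [exactlyOneProb]
    linarith
  have hn' : (1 : ℝ) ≤ n := by exact_mod_cast hn
  have hlead : 3 / 2 ≤ ((2 * n + 1 : ℕ) : ℝ) * ((n : ℝ) + 1)⁻¹ := by
    push_cast
    rw [le_mul_inv_iff₀ (by positivity)]
    linarith
  have hpow : Real.exp (-1) ^ 2 ≤ (1 - ((n : ℝ) + 1)⁻¹) ^ (2 * n) := by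
    rw [mul_comm, pow_mul]
    gcongr
    exact exp_neg_one_le_one_sub_inv_pow n
  have he3 : Real.exp 1 ≤ 3 := Real.exp_one_lt_d9.le.trans (by norm_num)
  calc 1 / (2 * Real.exp 1) ≤ 3 / 2 * Real.exp (-1) ^ 2 := by
        rw [Real.exp_neg, inv_pow, div_le_iff₀ (by positivity)]
        field_simp
        nlinarith
    _ ≤ exactlyOneProb (2 * n + 1) ((n : ℝ) + 1)⁻¹ := by
        rw [exactlyOneProb, Nat.add_sub_cancel]
        gcongr

lemma one_div_two_mul_exp_le_exactlyOneProb {m s : ℕ} (hms : m ≤ s) (hsm : s < 2 * m) :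
    1 / (2 * Real.exp 1) ≤ exactlyOneProb s (m : ℝ)⁻¹ := by
  obtain ⟨n, rfl⟩ : ∃ n, m = n + 1 := Nat.exists_eq_add_one.mpr (by omega)
  have hs : 1 ≤ (s : ℝ) * ((n + 1 : ℕ) : ℝ)⁻¹ := by
    rw [le_mul_inv_iff₀ (by positivity), one_mul]
    exact_mod_cast hms
  push_cast at hs ⊢
  calc 1 / (2 * Real.exp 1) ≤ exactlyOneProb (2 * n + 1) ((n : ℝ) + 1)⁻¹ :=
        one_div_two_mul_exp_le_exactlyOneProb_two_mul_add_one n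
    _ ≤ exactlyOneProb s ((n : ℝ) + 1)⁻¹ :=
        antitoneOn_exactlyOneProb (by positivity) (inv_le_one_of_one_le₀ (by simp)) hs
          Set.self_mem_Ici (show s ≤ 2 * n + 1 by omega) (show s ≤ 2 * n + 1 by omega)

section IndepBool

variable {Ω ι : Type*} [MeasurableSpace Ω] {μ : Measure Ω} [IsProbabilityMeasure μ]

lemma probReal_eq_false {f : Ω → Bool} (hf : Measurable f) :
    μ.real {ω | f ω = false} = 1 - μ.real {ω | f ω = true} := by
  have hcompl : {ω | f ω = false} = {ω | f ω = true}ᶜ := by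
    ext ω
    simp
  rw [hcompl]
  exact probReal_compl_eq_one_sub (hf (measurableSet_singleton true))

variable [Fintype ι] {X : ι → Ω → Bool} {p : ℝ}

lemma probReal_forall_eq_decide_eq [DecidableEq ι] (hX : ∀ j, Measurable (X j))
    (hindep : iIndepFun X μ) (hp : ∀ j, μ.real {ω | X j ω = true} = p) (i : ι) :
    μ.real {ω | ∀ j, X j ω = decide (j = i)} = p * (1 - p) ^ (Fintype.card ι - 1) := by
  have hfactor : ∀ j, μ.real (X j ⁻¹' {decide (j = i)}) = if j = i then p else 1 - p := by
    intro j
    change μ.real {ω | X j ω = decide (j = i)} = _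
    by_cases hj : j = i
    · simpa [hj] using hp j
    · simpa [hj, ← hp j] using probReal_eq_false (μ := μ) (hX j)
  have hinter : {ω | ∀ j, X j ω = decide (j = i)} = ⋂ j ∈ univ, X j ⁻¹' {decide (j = i)} := by
    ext ω
    simp
  rw [hinter, measureReal_def, hindep.measure_inter_preimage_eq_mul _
    fun j _ ↦ measurableSet_singleton _, ENNReal.toReal_prod]
  simp only [← measureReal_def, hfactor]
  rw [prod_ite, filter_eq', filter_ne']
  simp [card_erase_of_mem]

lemma probReal_card_filter_eq_one (hX : ∀ j, Measurable (X j)) (hindep : iIndepFun X μ)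
    (hp : ∀ j, μ.real {ω | X j ω = true} = p) :
    μ.real {ω | (univ.filter fun j ↦ X j ω = true).card = 1}
      = exactlyOneProb (Fintype.card ι) p := by
  classical
  have hunion : {ω | (univ.filter fun j ↦ X j ω = true).card = 1}
      = ⋃ i, {ω | ∀ j, X j ω = decide (j = i)} := by
    ext ω
    simp only [Set.mem_ofPred_eq, Set.mem_iUnion, card_eq_one, Finset.ext_iff, mem_filter,
      mem_univ, true_and, mem_singleton]
    exact exists_congr fun i ↦ forall_congr' fun j ↦ by cases X j ω <;> simp
  have hdisj : Pairwise (Disjoint on fun i ↦ {ω | ∀ j, X j ω = decide (j = i)}) := by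
    intro i i' hne
    rw [Function.onFun, Set.disjoint_left]
    intro ω h h'
    simpa [hne] using (h i).symm.trans (h' i)
  have hmeas : ∀ i, MeasurableSet {ω | ∀ j, X j ω = decide (j = i)} := by
    intro i
    simp only [Set.ofPred_forall]
    exact .iInter fun j ↦ hX j (measurableSet_singleton _)
  rw [hunion, measureReal_iUnion_fintype hdisj hmeas]
  simp [probReal_forall_eq_decide_eq hX hindep hp, exactlyOneProb, mul_assoc]

end IndepBool

theorem sample_isolates_unique_edge_general {α : Type*} (C : Finset α) (i : ℕ)
    {Ω : Type*} [MeasurableSpace Ω] (μ : Measure Ω) [IsProbabilityMeasure μ]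
    (sel : C → Ω → Bool) (hmeas : ∀ e, Measurable (sel e))
    (hindep : ProbabilityTheory.iIndepFun sel μ)
    (hprob : ∀ e : C, (μ {ω | sel e ω = true}).toReal = (2 : ℝ)⁻¹ ^ i)
    (hlow : 2 ^ i ≤ C.card) (hhigh : C.card < 2 ^ (i + 1)) :
    (μ {ω | (Finset.univ.filter (fun e : C => sel e ω = true)).card = 1}).toReal
        ≥ (C.card : ℝ) * (2 : ℝ)⁻¹ ^ i * (1 - (2 : ℝ)⁻¹ ^ i) ^ (C.card - 1)
      ∧ (C.card : ℝ) * (2 : ℝ)⁻¹ ^ i * (1 - (2 : ℝ)⁻¹ ^ i) ^ (C.card - 1)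
          ≥ 1 / (2 * Real.exp 1)
      ∧ 1 / (2 * Real.exp 1) > 1 / 9 := by
  have hexactlyOne : μ.real {ω | (univ.filter fun e : C ↦ sel e ω = true).card = 1}
      = exactlyOneProb C.card ((2 : ℝ)⁻¹ ^ i) := by
    rw [probReal_card_filter_eq_one hmeas hindep hprob, Fintype.card_coe]
  have hlevel : (2 : ℝ)⁻¹ ^ i = ((2 ^ i : ℕ) : ℝ)⁻¹ := by push_cast; rw [inv_pow]
  refine ⟨hexactlyOne.ge, ?_, ?_⟩
  · rw [ge_iff_le, hlevel]
    exact one_div_two_mul_exp_le_exactlyOneProb hlow (by omega)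
  · rw [gt_iff_lt, one_div_lt_one_div (by norm_num) (by positivity)]
    linarith [Real.exp_one_lt_d9]

/-- Sampling at the right level isolates one cut edge: if `C` has `s` elements
with `2^i ≤ s ≤ 2^(i+1)`, and each element of `C` is kept independently with
probability `2^(-i)`, then the probability that exactly one element survives is
at least `s·2^(-i)·(1-2^(-i))^(s-1) ≥ 1/(2e) > 1/9`. -/
theorem sample_isolates_unique_edge {α : Type*} (C : Finset α) (n i : ℕ)
    {Ω : Type*} [MeasurableSpace Ω] (μ : Measure Ω) [IsProbabilityMeasure μ]
    (sel : C → Ω → Bool) (hmeas : ∀ e, Measurable (sel e))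
    (hindep : ProbabilityTheory.iIndepFun sel μ)
    (hprob : ∀ e : C, (μ {ω | sel e ω = true}).toReal = (2 : ℝ)⁻¹ ^ i)
    (hs : C.card ≠ 0) (hsn : C.card ≤ n ^ 2)
    (hlow : 2 ^ i ≤ C.card) (hhigh : C.card < 2 ^ (i + 1)) :
    (μ {ω | (Finset.univ.filter (fun e : C => sel e ω = true)).card = 1}).toReal
        ≥ (C.card : ℝ) * (2 : ℝ)⁻¹ ^ i * (1 - (2 : ℝ)⁻¹ ^ i) ^ (C.card - 1)
      ∧ (C.card : ℝ) * (2 : ℝ)⁻¹ ^ i * (1 - (2 : ℝ)⁻¹ ^ i) ^ (C.card - 1)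
          ≥ 1 / (2 * Real.exp 1)
      ∧ 1 / (2 * Real.exp 1) > 1 / 9 :=
  sample_isolates_unique_edge_general C i μ sel hmeas hindep hprob hlow hhigh
end

section
/- Combining the previous facts: if X_0,…,X_ℓ are non-increasing nonnegative integers with X_0 ≤ n, ℓ = 50c·log₂ n, and for each i the conditional probability (given X_0,…,X_{i-1}) of the event {X_{i-1} = 0 or X_i ≤ (7/8)X_{i-1}} is at least 1/7, then P(X_ℓ > 0) ≤ exp(-(50c log₂ n/21)(1-56/(50c))²) < n^{-c} for c ≥ 10 and n ≥ 2. -/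
/-!
The tail is controlled by a union bound over sets of failed steps rather than by a Chernoff
bound. If `X_ℓ > 0`, at most `8 log₂ n` of the `ℓ` steps can have shrunk the process by `7/8`,
because `X_0 ≤ n` and `(8/7)^8 ≥ 2`; so some `K = ℓ - ⌊8 log₂ n⌋` steps all failed. Conditioning
step by step on the history `X_0, …, X_{i-1}`, a fixed set of `K` steps all fail with probability
at most `(6/7)^K`. Hence `P(X_ℓ > 0) ≤ C(ℓ, K) (6/7)^K`, and `C(ℓ, m) ≤ (5c)^m e^(ℓ/(5c))` for
`m = ℓ - K` turns this into the stated exponential.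
-/

open MeasureTheory ProbabilityTheory Finset
open scoped ENNReal

section Conditioning

variable {Ω : Type*} [MeasurableSpace Ω] {μ : Measure Ω}

theorem measure_preimage_inter_le_of_fiber {β : Type*} [MeasurableSpace β] [Countable β]
    [MeasurableSingletonClass β] {f : Ω → β} (hf : Measurable f) {E : Set Ω} {p : ℝ≥0∞}
    (h : ∀ b, μ (f ⁻¹' {b} ∩ E) ≤ p * μ (f ⁻¹' {b})) (B : Set β) :
    μ (f ⁻¹' B ∩ E) ≤ p * μ (f ⁻¹' B) := by
  have hfib : ∀ b ∈ B, MeasurableSet (f ⁻¹' {b}) := fun b _ => hf (measurableSet_singleton b)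
  calc μ (f ⁻¹' B ∩ E) = ∑' b : B, μ.restrict E (f ⁻¹' {↑b}) := by
        rw [tsum_measure_preimage_singleton B.to_countable hfib,
          Measure.restrict_apply (hf B.to_countable.measurableSet)]
    _ ≤ ∑' b : B, p * μ (f ⁻¹' {↑b}) := ENNReal.tsum_le_tsum fun b =>
        (Measure.restrict_apply (hfib b b.2)).trans_le (h b)
    _ = p * μ (f ⁻¹' B) := by
        rw [ENNReal.tsum_mul_left, tsum_measure_preimage_singleton B.to_countable hfib]

/-- Peeling off the largest index `a`: the intersection over the smaller indices is a union of
fibres of `f a`, on each of which `F a` has relative mass at most `p`. -/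
theorem measure_biInter_le_pow_of_fiber [IsProbabilityMeasure μ] {β : ℕ → Type*}
    [∀ i, MeasurableSpace (β i)] [∀ i, Countable (β i)] [∀ i, MeasurableSingletonClass (β i)]
    {f : ∀ i, Ω → β i} (hf : ∀ i, Measurable (f i)) {F : ℕ → Set Ω} {p : ℝ≥0∞} (T : Finset ℕ)
    (hdet : ∀ i ∈ T, ∀ j ∈ T, j < i → ∀ ω ω', f i ω = f i ω' → ω ∈ F j → ω' ∈ F j)
    (hfib : ∀ i ∈ T, ∀ b, μ (f i ⁻¹' {b} ∩ F i) ≤ p * μ (f i ⁻¹' {b})) :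
    μ (⋂ i ∈ T, F i) ≤ p ^ T.card := by
  induction T using Finset.induction_on_max with
  | empty => simp
  | insert a s hlt ih =>
    set A := ⋂ j ∈ s, F j
    have hsat : f a ⁻¹' (f a '' A) = A := by
      refine Set.Subset.antisymm ?_ (Set.subset_preimage_image _ _)
      rintro ω' ⟨ω, hω, hωω'⟩
      simp only [A, Set.mem_iInter₂] at hω ⊢
      exact fun j hj => hdet a (mem_insert_self a s) j (mem_insert_of_mem hj) (hlt j hj)
        ω ω' hωω' (hω j hj)
    calc μ (⋂ i ∈ insert a s, F i) = μ (f a ⁻¹' (f a '' A) ∩ F a) := by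
          rw [set_biInter_insert, hsat, Set.inter_comm]
      _ ≤ p * μ (f a ⁻¹' (f a '' A)) :=
          measure_preimage_inter_le_of_fiber (hf a) (hfib a (mem_insert_self a s)) _
      _ = p * μ A := by rw [hsat]
      _ ≤ p * p ^ s.card := by
          gcongr
          exact ih (fun i hi j hj => hdet i (mem_insert_of_mem hi) j (mem_insert_of_mem hj))
            (fun i hi => hfib i (mem_insert_of_mem hi))
      _ = p ^ (insert a s).card := by
          rw [card_insert_of_notMem fun has => (hlt a has).false, pow_succ']

theorem measure_inter_compl_le_of_le_cond [IsFiniteMeasure μ] {s E : Set Ω}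
    (hs : MeasurableSet s) (hE : MeasurableSet E) {q : ℝ≥0∞} (h : μ s ≠ 0 → q ≤ μ[E | s]) :
    μ (s ∩ Eᶜ) ≤ (1 - q) * μ s := by
  rcases eq_or_ne (μ s) 0 with h0 | h0
  · simp [measure_inter_null_of_null_left _ h0]
  · have : IsProbabilityMeasure μ[|s] := cond_isProbabilityMeasure h0
    rw [← cond_mul_eq_inter hs, prob_compl_eq_one_sub hE]
    gcongr
    exact h h0

theorem measure_setOf_le_card_filter_le {ι : Type*} {F : ι → Set Ω} [∀ i ω, Decidable (ω ∈ F i)]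
    {I : Finset ι} {p : ℝ≥0∞}
    (h : ∀ T ⊆ I, μ (⋂ i ∈ T, F i) ≤ p ^ T.card) (K : ℕ) :
    μ {ω | K ≤ #{i ∈ I | ω ∈ F i}} ≤ I.card.choose K * p ^ K := by
  have hcover : {ω | K ≤ #{i ∈ I | ω ∈ F i}} ⊆ ⋃ T ∈ powersetCard K I, ⋂ i ∈ T, F i := by
    intro ω hω
    obtain ⟨T, hT, hTcard⟩ := exists_subset_card_eq hω
    simp only [Set.mem_iUnion, Set.mem_iInter, mem_powersetCard]
    exact ⟨T, ⟨hT.trans (filter_subset _ _), hTcard⟩, fun i hi => (mem_filter.1 (hT hi)).2⟩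
  calc μ {ω | K ≤ #{i ∈ I | ω ∈ F i}}
      ≤ ∑ T ∈ powersetCard K I, μ (⋂ i ∈ T, F i) :=
        (measure_mono hcover).trans (measure_biUnion_finset_le _ _)
    _ ≤ ∑ T ∈ powersetCard K I, p ^ K := sum_le_sum fun T hT => by
        rw [mem_powersetCard] at hT
        exact hT.2 ▸ h T hT.1
    _ = I.card.choose K * p ^ K := by rw [sum_const, card_powersetCard, nsmul_eq_mul]

end Conditioning

section Shrinking

/-- The success event `Y_i` of the paper, there with `r = 7/8`. -/
def Shrinks (r : ℝ) (x : ℕ → ℕ) (i : ℕ) : Prop :=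
  x (i - 1) = 0 ∨ (x i : ℝ) ≤ r * x (i - 1)

theorem Shrinks.le_mul {r : ℝ} {x : ℕ → ℕ} {k : ℕ} (h : Shrinks r x (k + 1))
    (hmono : x (k + 1) ≤ x k) : (x (k + 1) : ℝ) ≤ r * x k := by
  rcases h with h | h
  · simp_all
  · simpa using h

open scoped Classical in
theorem cast_le_pow_card_shrinks_mul {r : ℝ} (hr : 0 ≤ r) {x : ℕ → ℕ} {ℓ : ℕ}
    (hmono : ∀ i < ℓ, x (i + 1) ≤ x i) :
    ∀ k ≤ ℓ, (x k : ℝ) ≤ r ^ #{i ∈ Icc 1 k | Shrinks r x i} * x 0 := by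
  intro k hk
  induction k with
  | zero => simp
  | succ k ih =>
    have hk' : k < ℓ := hk
    rw [← Finset.insert_Icc_right_eq_Icc_add_one (by omega), filter_insert]
    split_ifs with hs
    · rw [card_insert_of_notMem (by simp), pow_succ', mul_assoc]
      exact (hs.le_mul (hmono k hk')).trans (by gcongr; exact ih hk'.le)
    · exact (Nat.cast_le.2 (hmono k hk')).trans (ih hk'.le)

open scoped Classical in
theorem card_shrinks_le_mul_logb {x : ℕ → ℕ} {ℓ n : ℕ} (hmono : ∀ i < ℓ, x (i + 1) ≤ x i)
    (hpos : 0 < x ℓ) (hx0 : x 0 ≤ n) :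
    (#{i ∈ Icc 1 ℓ | Shrinks (7 / 8) x i} : ℝ) ≤ 8 * Real.logb 2 n := by
  set s := #{i ∈ Icc 1 ℓ | Shrinks (7 / 8) x i}
  have hgeom : (1 : ℝ) ≤ (7 / 8) ^ s * n := calc
    (1 : ℝ) ≤ x ℓ := by exact_mod_cast hpos
    _ ≤ (7 / 8) ^ s * x 0 := cast_le_pow_card_shrinks_mul (by norm_num) hmono ℓ le_rfl
    _ ≤ (7 / 8) ^ s * n := by gcongr
  have hpow : (8 / 7 : ℝ) ^ s ≤ n := calc
    (8 / 7 : ℝ) ^ s ≤ (8 / 7) ^ s * ((7 / 8) ^ s * n) :=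
      le_mul_of_one_le_right (by positivity) hgeom
    _ = n := by rw [← mul_assoc, ← mul_pow]; norm_num
  have htwo : (2 : ℝ) ^ s ≤ (n : ℝ) ^ 8 := calc
    (2 : ℝ) ^ s ≤ ((8 / 7) ^ 8) ^ s := pow_le_pow_left₀ (by norm_num) (by norm_num) s
    _ = ((8 / 7) ^ s) ^ 8 := by rw [← pow_mul, ← pow_mul, mul_comm]
    _ ≤ (n : ℝ) ^ 8 := by gcongr
  have hlog := Real.log_le_log (by positivity) htwo
  rw [Real.log_pow, Real.log_pow] at hlog
  rw [Real.logb, mul_div_assoc', le_div_iff₀ (Real.log_pos one_lt_two)]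
  push_cast at hlog
  linarith

open scoped Classical in
theorem sub_floor_le_card_not_shrinks {x : ℕ → ℕ} {ℓ n : ℕ}
    (hmono : ∀ i < ℓ, x (i + 1) ≤ x i) (hpos : 0 < x ℓ) (hx0 : x 0 ≤ n) :
    ℓ - ⌊8 * Real.logb 2 n⌋₊ ≤ #{i ∈ Icc 1 ℓ | ¬Shrinks (7 / 8) x i} := by
  have hshrinks := Nat.le_floor (card_shrinks_le_mul_logb hmono hpos hx0)
  have hsplit := card_filter_add_card_filter_not (s := Icc 1 ℓ) (fun i => Shrinks (7 / 8) x i)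
  rw [Nat.card_Icc] at hsplit
  omega

end Shrinking

section Numerics

open Real

theorem Nat.choose_le_pow_mul_exp_div (n k : ℕ) {t : ℝ} (ht : 0 < t) :
    (n.choose k : ℝ) ≤ t ^ k * exp (n / t) := calc
  (n.choose k : ℝ) ≤ n ^ k / k.factorial := Nat.choose_le_pow_div k n
  _ = t ^ k * ((n / t) ^ k / k.factorial) := by rw [div_pow]; field_simp
  _ ≤ t ^ k * exp (n / t) := by gcongr; exact Real.pow_div_factorial_le_exp _ (by positivity) k

theorem log_five_mul_le {c : ℝ} (hc : 0 < c) : log (5 * c) ≤ 5 * c / 64 + 6 * log 2 - 1 := by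
  have h := log_le_sub_one_of_pos (x := 5 * c / 64) (by positivity)
  rw [log_div (by positivity) (by norm_num), show (64 : ℝ) = 2 ^ 6 by norm_num, log_pow] at h
  push_cast at h
  linarith

theorem choose_mul_pow_le_exp (ℓ m : ℕ) {c L : ℝ} (hc : 10 ≤ c) (hL : 0 ≤ L)
    (hℓ : (ℓ : ℝ) = 50 * c * L) (hm : (m : ℝ) ≤ 8 * L) :
    (ℓ.choose (ℓ - m) : ℝ) * (6 / 7) ^ (ℓ - m)
      ≤ exp (-(50 * c * L / 21) * (1 - 56 / (50 * c)) ^ 2) := by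
  have hc0 : 0 < c := by linarith
  have hmℓ : m ≤ ℓ := by
    have : (m : ℝ) ≤ ℓ := by rw [hℓ]; nlinarith
    exact_mod_cast this
  have hlog : 0 ≤ log (5 * c) + 1 / 7 := by
    have := log_nonneg (by linarith : (1 : ℝ) ≤ 5 * c); linarith
  have hseven : (6 / 7 : ℝ) ≤ exp (-1 / 7) := by linarith [add_one_le_exp (-1 / 7)]
  have hexponent : 8 * L * (log (5 * c) + 1 / 7) + 10 * L - 50 * c * L / 7
      ≤ -(50 * c * L / 21) * (1 - 56 / (50 * c)) ^ 2 := by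
    have hδ : 0 ≤ 1 - 56 / (50 * c) := by
      rw [sub_nonneg, div_le_one (by positivity)]; linarith
    have hδ1 : (1 - 56 / (50 * c)) ^ 2 ≤ 1 := pow_le_one₀ hδ (by simp; positivity)
    have hcoef : 8 * (log (5 * c) + 1 / 7) + 10 - 50 * c / 7 ≤ -(50 * c / 21) := by
      linarith [log_five_mul_le hc0, log_two_lt_d9]
    nlinarith [mul_le_mul_of_nonneg_left hcoef hL,
      mul_le_mul_of_nonneg_left hδ1 (by positivity : 0 ≤ 50 * c * L / 21)]
  calc (ℓ.choose (ℓ - m) : ℝ) * (6 / 7) ^ (ℓ - m)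
      ≤ (5 * c) ^ m * exp (ℓ / (5 * c)) * exp (-1 / 7) ^ (ℓ - m) := by
        rw [Nat.choose_symm hmℓ]
        gcongr
        exact Nat.choose_le_pow_mul_exp_div ℓ m (by positivity)
    _ = exp (m * log (5 * c) + ℓ / (5 * c) + (ℓ - m : ℕ) * (-1 / 7)) := by
        rw [exp_add, exp_add, exp_nat_mul, exp_nat_mul, exp_log (by positivity)]
    _ ≤ exp (-(50 * c * L / 21) * (1 - 56 / (50 * c)) ^ 2) := by
        gcongr
        rw [Nat.cast_sub hmℓ, hℓ, show 50 * c * L / (5 * c) = 10 * L by field_simp; ring]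
        nlinarith [hexponent, mul_le_mul_of_nonneg_right hm hlog]

theorem exp_lt_rpow_neg {n : ℕ} {c : ℝ} (hn : 2 ≤ n) (hc : 10 ≤ c) :
    exp (-(50 * c * logb 2 n / 21) * (1 - 56 / (50 * c)) ^ 2) < (n : ℝ) ^ (-c) := by
  have hn0 : (0 : ℝ) < n := by positivity
  have hL : 0 < logb 2 n := logb_pos one_lt_two (by exact_mod_cast hn)
  have hδ : 3 / 4 ≤ 1 - 56 / (50 * c) := by
    rw [le_sub_comm, div_le_iff₀ (by positivity)]; linarith
  have hδ2 : 9 / 16 ≤ (1 - 56 / (50 * c)) ^ 2 := by nlinarith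
  have hlogn : log n = logb 2 n * log 2 := by
    rw [logb, div_mul_cancel₀ _ (log_pos one_lt_two).ne']
  rw [rpow_def_of_pos hn0, hlogn, exp_lt_exp]
  nlinarith [log_two_lt_d9,
    mul_le_mul_of_nonneg_left hδ2 (by positivity : 0 ≤ 50 * c * logb 2 n / 21),
    mul_pos (by linarith : (0 : ℝ) < c) hL]

end Numerics

section History

variable {Ω : Type*} {X : ℕ → Ω → ℕ}

def history (X : ℕ → Ω → ℕ) (i : ℕ) (ω : Ω) : Fin i → ℕ := fun j => X j ω

theorem measurable_history [MeasurableSpace Ω] (hX : ∀ i, Measurable (X i)) (i : ℕ) :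
    Measurable (history X i) :=
  measurable_pi_lambda _ fun j => hX j

theorem history_preimage_singleton (X : ℕ → Ω → ℕ) (i : ℕ) (v : Fin i → ℕ) :
    history X i ⁻¹' {v} = {ω | ∀ j, j < i → X j ω = if h : j < i then v ⟨j, h⟩ else 0} := by
  ext ω
  simp +contextual [history, funext_iff, Fin.forall_iff]

theorem shrinks_of_history_eq {r : ℝ} {i j : ℕ} (hji : j < i) {ω ω' : Ω}
    (h : history X i ω = history X i ω') (hω : Shrinks r (X · ω) j) : Shrinks r (X · ω') j := by
  have hj : X j ω = X j ω' := congrFun h ⟨j, hji⟩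
  have hj' : X (j - 1) ω = X (j - 1) ω' := congrFun h ⟨j - 1, by omega⟩
  simpa only [Shrinks, hj, hj'] using hω

theorem measurableSet_shrinks [MeasurableSpace Ω] (hX : ∀ i, Measurable (X i)) (r : ℝ) (i : ℕ) :
    MeasurableSet {ω | Shrinks r (X · ω) i} :=
  ((hX (i - 1)).prodMk (hX i))
    (Set.to_countable {p : ℕ × ℕ | p.1 = 0 ∨ (p.2 : ℝ) ≤ r * p.1}).measurableSet

theorem measure_history_fiber_inter_not_shrinks_le [MeasurableSpace Ω] {μ : Measure Ω}
    [IsFiniteMeasure μ] (hX : ∀ i, Measurable (X i)) {r : ℝ} {q : ℝ≥0∞} {i : ℕ}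
    (h : ∀ x : ℕ → ℕ, μ {ω | ∀ j, j < i → X j ω = x j} ≠ 0 →
      μ[|{ω | ∀ j, j < i → X j ω = x j}] {ω | Shrinks r (X · ω) i} ≥ q) (v : Fin i → ℕ) :
    μ (history X i ⁻¹' {v} ∩ {ω | Shrinks r (X · ω) i}ᶜ) ≤ (1 - q) * μ (history X i ⁻¹' {v}) := by
  have hv := measurable_history hX i (measurableSet_singleton v)
  rw [history_preimage_singleton] at hv ⊢
  exact measure_inter_compl_le_of_le_cond hv (measurableSet_shrinks hX r i) (h _)

end History

/-- Combined failure-probability bound for the layered process: if the `X_i`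
are non-increasing nonnegative integers with `X_0 ≤ n`, `ℓ = 50c·log₂ n`, and
conditioned on any values of `X_0,…,X_{i-1}` the event
`{X_{i-1} = 0 ∨ X_i ≤ (7/8)X_{i-1}}` has probability at least `1/7`, then
`P(X_ℓ > 0) ≤ exp(-(50c·log₂ n/21)(1 - 56/(50c))²) < n^{-c}`. -/
theorem layered_failure_bound {Ω : Type*} [MeasurableSpace Ω]
    (μ : Measure Ω) [IsProbabilityMeasure μ] (n ℓ : ℕ) (c : ℝ)
    (hn : 2 ≤ n) (hc : 10 ≤ c)
    (hℓ : (ℓ : ℝ) = 50 * c * Real.logb 2 n)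
    (X : ℕ → Ω → ℕ) (hmeas : ∀ i, Measurable (X i))
    (hX0 : ∀ ω, X 0 ω ≤ n)
    (hmono : ∀ i ω, i < ℓ → X (i + 1) ω ≤ X i ω)
    (hcond : ∀ i, 1 ≤ i → i ≤ ℓ → ∀ x : ℕ → ℕ,
      μ {ω | ∀ j, j < i → X j ω = x j} ≠ 0 →
      (μ[|{ω | ∀ j, j < i → X j ω = x j}])
          {ω | X (i - 1) ω = 0 ∨ (X i ω : ℝ) ≤ (7 / 8) * (X (i - 1) ω : ℝ)}
        ≥ ENNReal.ofReal (1 / 7)) :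
    (μ {ω | 0 < X ℓ ω}).toReal
        ≤ Real.exp (-(50 * c * Real.logb 2 n / 21) * (1 - 56 / (50 * c)) ^ 2)
      ∧ Real.exp (-(50 * c * Real.logb 2 n / 21) * (1 - 56 / (50 * c)) ^ 2)
          < (n : ℝ) ^ (-c) := by
  classical
  have hL : 0 ≤ Real.logb 2 n := Real.logb_nonneg one_lt_two (by exact_mod_cast (by omega : 1 ≤ n))
  set m := ⌊8 * Real.logb 2 n⌋₊
  have hm : (m : ℝ) ≤ 8 * Real.logb 2 n := Nat.floor_le (by positivity)
  set F : ℕ → Set Ω := fun i => {ω | Shrinks (7 / 8) (X · ω) i}ᶜ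
  have hfiber : ∀ i ∈ Icc 1 ℓ, ∀ v, μ (history X i ⁻¹' {v} ∩ F i)
      ≤ ENNReal.ofReal (6 / 7) * μ (history X i ⁻¹' {v}) := fun i hi v => by
    rw [mem_Icc] at hi
    refine (measure_history_fiber_inter_not_shrinks_le hmeas (hcond i hi.1 hi.2) v).trans_eq ?_
    rw [← ENNReal.ofReal_one, ← ENNReal.ofReal_sub _ (by norm_num)]
    norm_num
  have hcover : {ω | 0 < X ℓ ω} ⊆ {ω | ℓ - m ≤ #{i ∈ Icc 1 ℓ | ω ∈ F i}} := fun ω hω => by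
    simpa only [F, Set.mem_compl_iff, Set.mem_ofPred_eq] using
      sub_floor_le_card_not_shrinks (x := (X · ω)) (fun i hi => hmono i ω hi) hω (hX0 ω)
  have hprob : μ {ω | 0 < X ℓ ω} ≤ ENNReal.ofReal (ℓ.choose (ℓ - m) * (6 / 7) ^ (ℓ - m)) := calc
    μ {ω | 0 < X ℓ ω} ≤ (Icc 1 ℓ).card.choose (ℓ - m) * ENNReal.ofReal (6 / 7) ^ (ℓ - m) :=
      (measure_mono hcover).trans <| measure_setOf_le_card_filter_le (F := F) (fun T hT =>
        measure_biInter_le_pow_of_fiber (F := F) (measurable_history hmeas) T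
          (fun i _ j _ hji ω ω' h => mt (shrinks_of_history_eq hji h.symm))
          (fun i hi => hfiber i (hT hi))) _
    _ = _ := by
      rw [Nat.card_Icc, ENNReal.ofReal_mul (by positivity), ENNReal.ofReal_pow (by norm_num)]
      simp
  exact ⟨(ENNReal.toReal_le_of_le_ofReal (by positivity) hprob).trans
      (choose_mul_pow_le_exp ℓ m hc hL hℓ hm), exp_lt_rpow_neg hn hc⟩
end
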